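/- arXiv:2602.16521 — 4 statements merged into one kernel-verified Lean document; each statement's English description precedes it below -/
import Mathlib

section
/- The Skorokhod regulator map Ψ and reflection map Φ are Lipschitz with respect to the uniform metric on càdlàg paths on [0,T]: for all càdlàg f₁, f₂ : [0,T] → ℝ, sup_{t ∈ [0,T]} |Ψ(f₁)(t) − Ψ(f₂)(t)| ≤ sup_{t ∈ [0,T]} |f₁(t) − f₂(t)| and sup_{t ∈ [0,T]} |Φ(f₁)(t) − Φ(f₂)(t)| ≤ 2 · sup_{t ∈ [0,T]} |f₁(t) − f₂(t)|. -/
open Set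

/-- `f` is càdlàg on `[0,T]`: right-continuous on `[0,T)` and with left limits on `(0,T]`. -/
def CadlagOn (f : ℝ → ℝ) (T : ℝ) : Prop :=
  (∀ t : ℝ, 0 ≤ t → t < T → ContinuousWithinAt f (Set.Ici t) t) ∧
  (∀ t : ℝ, 0 < t → t ≤ T → ∃ l : ℝ, Filter.Tendsto f (nhdsWithin t (Set.Iio t)) (nhds l))

lemma CadlagOn.bounded {f : ℝ → ℝ} {T : ℝ} (hf : CadlagOn f T) :
    ∃ M : ℝ, ∀ t ∈ Icc (0:ℝ) T, |f t| ≤ M := by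
  have hloc : ∀ x : ℝ, ∃ ε M : ℝ, 0 < ε ∧
      (x ∈ Icc (0:ℝ) T → ∀ s ∈ Ioo (x - ε) (x + ε) ∩ Icc (0:ℝ) T, |f s| ≤ M) := by
    intro x
    by_cases hx : x ∈ Icc (0:ℝ) T
    · -- right side
      obtain ⟨δ₁, hδ₁, h₁⟩ : ∃ δ₁ > 0, ∀ s ∈ Icc (0:ℝ) T, x ≤ s → s - x < δ₁ → |f s| ≤ |f x| + 1 := by
        rcases lt_or_eq_of_le hx.2 with h | h
        · have := (Metric.tendsto_nhdsWithin_nhds.mp (hf.1 x hx.1 h)) 1 one_pos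
          obtain ⟨δ, hδ, hδ'⟩ := this
          refine ⟨δ, hδ, fun s hs hxs hsx => ?_⟩
          have := hδ' (x := s) hxs (by rw [Real.dist_eq, abs_of_nonneg (by linarith)]; linarith)
          rw [Real.dist_eq] at this
          calc |f s| ≤ |f s - f x| + |f x| := by
                have := abs_add_le (f s - f x) (f x); simpa using this
            _ ≤ |f x| + 1 := by linarith
        · exact ⟨1, one_pos, fun s hs hxs _ => by
            have : s = x := le_antisymm (h ▸ hs.2) hxs
            simp [this]⟩
      -- left side
      obtain ⟨δ₂, M₂, hδ₂, h₂⟩ : ∃ δ₂ M₂ : ℝ, 0 < δ₂ ∧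
          ∀ s ∈ Icc (0:ℝ) T, s < x → x - s < δ₂ → |f s| ≤ M₂ := by
        rcases lt_or_eq_of_le hx.1 with h | h
        · obtain ⟨l, hl⟩ := hf.2 x h hx.2
          obtain ⟨δ, hδ, hδ'⟩ := (Metric.tendsto_nhdsWithin_nhds.mp hl) 1 one_pos
          refine ⟨δ, |l| + 1, hδ, fun s hs hsx hxs => ?_⟩
          have := hδ' (x := s) hsx (by rw [Real.dist_eq, abs_of_nonpos (by linarith)]; linarith)
          rw [Real.dist_eq] at this
          calc |f s| ≤ |f s - l| + |l| := by
                have := abs_add_le (f s - l) l; simpa using this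
            _ ≤ |l| + 1 := by linarith
        · exact ⟨1, 0, one_pos, fun s hs hsx _ => absurd (h ▸ hs.1) (not_le.mpr hsx)⟩
      refine ⟨min δ₁ δ₂, max (|f x| + 1) M₂, lt_min hδ₁ hδ₂, fun _ s hs => ?_⟩
      obtain ⟨⟨hs1, hs2⟩, hs3⟩ := hs
      rcases le_or_gt x s with h | h
      · exact le_trans (h₁ s hs3 h (by have := min_le_left δ₁ δ₂; linarith)) (le_max_left _ _)
      · exact le_trans (h₂ s hs3 h (by have := min_le_right δ₁ δ₂; linarith)) (le_max_right _ _)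
    · exact ⟨1, 0, one_pos, fun h => absurd h hx⟩
  choose ε M hε hM using hloc
  have hcomp : IsCompact (Icc (0:ℝ) T) := isCompact_Icc
  obtain ⟨t, htK, hcov⟩ := hcomp.elim_nhds_subcover (fun x => Ioo (x - ε x) (x + ε x))
    (fun x _ => Ioo_mem_nhds (by linarith [hε x]) (by linarith [hε x]))
  refine ⟨∑ x ∈ t, max (M x) 0, fun s hs => ?_⟩
  have hmem := hcov hs
  simp only [Set.mem_iUnion] at hmem
  obtain ⟨x, hxt, hsx⟩ := hmem
  calc |f s| ≤ M x := hM x (htK x hxt) s ⟨hsx, hs⟩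
    _ ≤ max (M x) 0 := le_max_left _ _
    _ ≤ ∑ x ∈ t, max (M x) 0 :=
        Finset.single_le_sum (fun y _ => le_max_right (M y) 0) hxt

/-- The Skorokhod regulator map `Ψ(f)(t) = sup_{0 ≤ s ≤ t} max (−f s) 0`. -/
noncomputable def Psi (f : ℝ → ℝ) (t : ℝ) : ℝ :=
  sSup ((fun s => max (-f s) 0) '' Set.Icc 0 t)

/-- The Skorokhod reflection map `Φ(f)(t) = f t + Ψ(f)(t)`. -/
noncomputable def Phi (f : ℝ → ℝ) (t : ℝ) : ℝ :=
  f t + Psi f t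

lemma psi_le_psi_add {f₁ f₂ : ℝ → ℝ} {T t M₁ M₂ : ℝ} (ht : t ∈ Icc (0:ℝ) T)
    (hb₁ : ∀ s ∈ Icc (0:ℝ) T, |f₁ s| ≤ M₁) (hb₂ : ∀ s ∈ Icc (0:ℝ) T, |f₂ s| ≤ M₂) :
    Psi f₁ t ≤ Psi f₂ t + sSup ((fun t => |f₁ t - f₂ t|) '' Icc 0 T) := by
  set D := sSup ((fun t => |f₁ t - f₂ t|) '' Icc 0 T) with hD
  have hsub : Icc (0:ℝ) t ⊆ Icc (0:ℝ) T := Icc_subset_Icc le_rfl ht.2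
  have hbddD : BddAbove ((fun t => |f₁ t - f₂ t|) '' Icc 0 T) := by
    refine ⟨M₁ + M₂, fun y hy => ?_⟩
    obtain ⟨s, hs, rfl⟩ := hy
    calc |f₁ s - f₂ s| ≤ |f₁ s| + |f₂ s| := abs_sub _ _
      _ ≤ M₁ + M₂ := add_le_add (hb₁ s hs) (hb₂ s hs)
  have hbdd₂ : BddAbove ((fun s => max (-f₂ s) 0) '' Icc 0 t) := by
    refine ⟨M₂, fun y hy => ?_⟩
    obtain ⟨s, hs, rfl⟩ := hy
    have := hb₂ s (hsub hs)
    have := abs_nonneg (f₂ s)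
    simp only [le_max_iff, max_le_iff]
    constructor
    · linarith [neg_le_abs (f₂ s)]
    · linarith
  have hPsi₂0 : 0 ≤ Psi f₂ t :=
    le_trans (le_max_right (-f₂ t) 0) (le_csSup hbdd₂ ⟨t, ⟨ht.1, le_rfl⟩, rfl⟩)
  have hD0 : 0 ≤ D :=
    le_trans (abs_nonneg _) (le_csSup hbddD ⟨t, ht, rfl⟩)
  refine Real.sSup_le ?_ (by linarith)
  rintro y ⟨s, hs, rfl⟩
  have h1 : max (-f₁ s) 0 ≤ max (-f₂ s) 0 + |f₁ s - f₂ s| := by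
    rcases le_max_iff.mpr (Or.inl (le_refl (-f₁ s))) with _
    have h2 : -f₁ s ≤ -f₂ s + |f₁ s - f₂ s| := by
      have := neg_abs_le (f₁ s - f₂ s); linarith
    have := le_max_left (-f₂ s) 0
    have := le_max_right (-f₂ s) 0
    have := abs_nonneg (f₁ s - f₂ s)
    rcases max_cases (-f₁ s) 0 with ⟨h, _⟩ | ⟨h, _⟩ <;> rw [h] <;> linarith
  calc max (-f₁ s) 0 ≤ max (-f₂ s) 0 + |f₁ s - f₂ s| := h1
    _ ≤ Psi f₂ t + D :=
      add_le_add (le_csSup hbdd₂ ⟨s, hs, rfl⟩) (le_csSup hbddD ⟨s, hsub hs, rfl⟩)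

/-- The Skorokhod regulator and reflection maps are Lipschitz (with constants 1 and 2)
with respect to the uniform metric on càdlàg paths on `[0,T]`. -/
theorem skorokhod_maps_lipschitz_uniform (T : ℝ) (hT : 0 ≤ T) (f₁ f₂ : ℝ → ℝ)
    (hf₁ : CadlagOn f₁ T) (hf₂ : CadlagOn f₂ T) :
    sSup ((fun t => |Psi f₁ t - Psi f₂ t|) '' Set.Icc 0 T) ≤
      sSup ((fun t => |f₁ t - f₂ t|) '' Set.Icc 0 T) ∧
    sSup ((fun t => |Phi f₁ t - Phi f₂ t|) '' Set.Icc 0 T) ≤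
      2 * sSup ((fun t => |f₁ t - f₂ t|) '' Set.Icc 0 T) := by
  obtain ⟨M₁, hb₁⟩ := hf₁.bounded
  obtain ⟨M₂, hb₂⟩ := hf₂.bounded
  set D := sSup ((fun t => |f₁ t - f₂ t|) '' Icc 0 T) with hDdef
  have himg : ((fun t => |f₂ t - f₁ t|) '' Icc 0 T) = ((fun t => |f₁ t - f₂ t|) '' Icc 0 T) := by
    simp only [abs_sub_comm]
  have hbddD : BddAbove ((fun t => |f₁ t - f₂ t|) '' Icc 0 T) := by
    refine ⟨M₁ + M₂, fun y hy => ?_⟩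
    obtain ⟨s, hs, rfl⟩ := hy
    calc |f₁ s - f₂ s| ≤ |f₁ s| + |f₂ s| := abs_sub _ _
      _ ≤ M₁ + M₂ := add_le_add (hb₁ s hs) (hb₂ s hs)
  have h0T : (0:ℝ) ∈ Icc (0:ℝ) T := ⟨le_rfl, hT⟩
  have hD0 : 0 ≤ D := le_trans (abs_nonneg _) (le_csSup hbddD ⟨0, h0T, rfl⟩)
  have hPsi : ∀ t ∈ Icc (0:ℝ) T, |Psi f₁ t - Psi f₂ t| ≤ D := by
    intro t ht
    rw [abs_sub_le_iff]
    constructor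
    · have := psi_le_psi_add ht hb₁ hb₂; linarith
    · have := psi_le_psi_add ht hb₂ hb₁
      rw [himg] at this; linarith
  constructor
  · refine Real.sSup_le ?_ hD0
    rintro y ⟨t, ht, rfl⟩
    exact hPsi t ht
  · refine Real.sSup_le ?_ (by linarith)
    rintro y ⟨t, ht, rfl⟩
    have h1 : |f₁ t - f₂ t| ≤ D := le_csSup hbddD ⟨t, ht, rfl⟩
    have h2 := hPsi t ht
    calc |Phi f₁ t - Phi f₂ t| = |(f₁ t - f₂ t) + (Psi f₁ t - Psi f₂ t)| := by
          simp [Phi]; ring_nf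
      _ ≤ |f₁ t - f₂ t| + |Psi f₁ t - Psi f₂ t| := abs_add_le _ _
      _ ≤ 2 * D := by linarith
end

section
/- Let (a_n)_{n ≥ 0} be a real sequence with a_0 = 0, λ > 0, and let g : [0,∞) → [0,∞) be a non-decreasing càdlàg function whose range contains λ⁻¹·ℕ. Define the stepped path a^λ(t) = a_{⌊λt⌋}. Then Φ(a^λ) ∘ g = Φ(a^λ ∘ g) and Ψ(a^λ) ∘ g = Ψ(a^λ ∘ g), i.e. the reflection and regulator maps commute with the time-change by g for stepped paths. -/
open Set

/-- The stepped path `a^λ(t) = a_{⌊λ t⌋}` associated to a sequence `a`. -/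
noncomputable def steppedPath (a : ℕ → ℝ) (lam : ℝ) (t : ℝ) : ℝ :=
  a ⌊lam * t⌋₊

/-- For a real sequence `a` with `a 0 = 0`, `λ > 0`, and a non-decreasing càdlàg time change
`g : [0,∞) → [0,∞)` whose range contains `λ⁻¹·ℕ`, the Skorokhod reflection and regulator
maps commute with the time change on the stepped path `a^λ`. -/
theorem skorokhod_maps_stepped_time_change (a : ℕ → ℝ) (ha0 : a 0 = 0)
    (lam : ℝ) (hlam : 0 < lam) (g : ℝ → ℝ)
    (hg_mono : MonotoneOn g (Set.Ici 0))
    (hg_nonneg : ∀ t : ℝ, 0 ≤ t → 0 ≤ g t)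
    (hg_rc : ∀ t : ℝ, 0 ≤ t → ContinuousWithinAt g (Set.Ici t) t)
    (hg_range : ∀ n : ℕ, ∃ t : ℝ, 0 ≤ t ∧ g t = (n : ℝ) / lam) :
    (∀ t : ℝ, 0 ≤ t → Phi (steppedPath a lam) (g t) = Phi (fun s => steppedPath a lam (g s)) t) ∧
    (∀ t : ℝ, 0 ≤ t → Psi (steppedPath a lam) (g t) = Psi (fun s => steppedPath a lam (g s)) t) := by
  have key : ∀ t : ℝ, 0 ≤ t →
      Psi (steppedPath a lam) (g t) = Psi (fun s => steppedPath a lam (g s)) t := by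
    intro t ht
    have hgt : 0 ≤ g t := hg_nonneg t ht
    set N := ⌊lam * g t⌋₊ with hNdef
    -- for every n ≤ N there is s ∈ [0,t] with ⌊lam * g s⌋₊ = n
    have exists_s : ∀ n : ℕ, n ≤ N → ∃ s : ℝ, 0 ≤ s ∧ s ≤ t ∧ ⌊lam * g s⌋₊ = n := by
      intro n hn
      obtain ⟨t', ht'0, ht'g⟩ := hg_range n
      have hfl' : lam * g t' = (n : ℝ) := by
        rw [ht'g]; field_simp
      by_cases hle : t' ≤ t
      · exact ⟨t', ht'0, hle, by rw [hfl', Nat.floor_natCast]⟩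
      · push_neg at hle
        have h1 : g t ≤ g t' := hg_mono ht (le_of_lt (lt_of_le_of_lt ht hle)) hle.le
        have h2 : lam * g t ≤ (n : ℝ) := by
          rw [← hfl']
          nlinarith
        have h3 : (N : ℝ) ≤ lam * g t := Nat.floor_le (by positivity)
        have h4 : N ≤ n := by exact_mod_cast le_trans h3 h2
        have h5 : n = N := le_antisymm hn h4
        have h6 : lam * g t = (n : ℝ) := le_antisymm h2 (h5 ▸ h3)
        exact ⟨t, le_refl 0 |>.trans ht, le_refl t, by rw [h6, Nat.floor_natCast]⟩
    have hset : (fun s => max (-(steppedPath a lam s)) 0) '' Set.Icc 0 (g t)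
        = (fun s => max (-(steppedPath a lam (g s))) 0) '' Set.Icc 0 t := by
      ext x
      simp only [Set.mem_image, Set.mem_Icc, steppedPath]
      constructor
      · rintro ⟨u, ⟨hu0, hu1⟩, rfl⟩
        have hn : ⌊lam * u⌋₊ ≤ N :=
          Nat.floor_le_floor (by nlinarith)
        obtain ⟨s, hs0, hs1, hfl⟩ := exists_s _ hn
        exact ⟨s, ⟨hs0, hs1⟩, by rw [hfl]⟩
      · rintro ⟨s, ⟨hs0, hs1⟩, rfl⟩
        exact ⟨g s, ⟨hg_nonneg s hs0, hg_mono hs0 ht hs1⟩, rfl⟩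
    unfold Psi
    rw [hset]
  refine ⟨fun t ht => ?_, key⟩
  unfold Phi
  rw [key t ht]
end

section
/- Let X and Y be independent real-valued càdlàg stochastic processes on [0,∞) such that X is stochastically continuous (for every t, X(s) → X(t) in probability as s → t). Then for every measurable functional F from càdlàg path space to [0,∞), almost surely X(F(Y)−) = X(F(Y)), i.e. X is almost surely continuous at the random time F(Y). In particular, X and Y almost surely share no common discontinuity point. -/
open MeasureTheory ProbabilityTheory Filter Set

/-- `f` is càdlàg on `[0,∞)`. -/
def Cadlag (f : ℝ → ℝ) : Prop :=
  (∀ t : ℝ, 0 ≤ t → ContinuousWithinAt f (Set.Ici t) t) ∧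
  (∀ t : ℝ, 0 < t → ∃ l : ℝ, Filter.Tendsto f (nhdsWithin t (Set.Iio t)) (nhds l))

/-- `t` is a (left) discontinuity point of the path `f`. -/
def PathDisc (f : ℝ → ℝ) (t : ℝ) : Prop :=
  ¬ Filter.Tendsto f (nhdsWithin t (Set.Iio t)) (nhds (f t))

/-!
At a fixed time `t > 0`, stochastic continuity yields times `sₙ ↑ t` with `X sₙ → X t` almost
surely, while `X sₙ → X (t−)` for every path; so `X` is almost surely continuous at `t`. For a
random time `T = F (Y)`, independence makes the law of `(T, X)` a product measure, and Fubini
turns the fixed-time statement into almost sure continuity at `T`. Finally, a jump of `Y` at `t`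
of size `> 2δ` is recovered from `Y` by a measurable functional from a countable family: for a
rational `u` just below `t`, `t` is the infimum of the rationals `b` for which the oscillation of
`Y` over `(u, b]` reaches `δ`.
-/

open scoped ENNReal Topology

theorem MeasureTheory.TendstoInMeasure.ae_tendsto_of_ae_exists_tendsto
    {α ι E : Type*} [MeasurableSpace α] {μ : Measure α} [EMetricSpace E]
    {u : Filter ι} [u.NeBot] [u.IsCountablyGenerated] {f : ι → α → E} {g : α → E}
    (hfg : TendstoInMeasure μ f u g)
    (hconv : ∀ᵐ x ∂μ, ∃ c, Tendsto (fun i => f i x) u (𝓝 c)) :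
    ∀ᵐ x ∂μ, Tendsto (fun i => f i x) u (𝓝 (g x)) := by
  obtain ⟨ns, hns, hae⟩ := hfg.exists_seq_tendsto_ae'
  filter_upwards [hae, hconv] with x hx ⟨c, hc⟩
  rwa [tendsto_nhds_unique (hc.comp hns) hx] at hc

theorem ProbabilityTheory.IndepFun.measure_mem_eq_zero
    {Ω α β : Type*} [MeasurableSpace Ω] [MeasurableSpace α] [MeasurableSpace β]
    {μ : Measure Ω} [IsFiniteMeasure μ] {f : Ω → α} {g : Ω → β}
    (hfg : IndepFun f g μ) (hf : Measurable f) (hg : Measurable g)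
    {s : Set (α × β)} (hs : MeasurableSet s) (hslice : ∀ a, μ {ω | (a, g ω) ∈ s} = 0) :
    μ {ω | (f ω, g ω) ∈ s} = 0 := by
  have hmap := (indepFun_iff_map_prod_eq_prod_map_map hf.aemeasurable hg.aemeasurable).1 hfg
  change μ ((fun ω => (f ω, g ω)) ⁻¹' s) = 0
  rw [← Measure.map_apply (hf.prodMk hg) hs, hmap, Measure.prod_apply hs]
  refine (lintegral_congr fun a => ?_).trans lintegral_zero
  rw [Measure.map_apply hg (measurable_prodMk_left hs)]
  exact hslice a

theorem measurable_apply_of_countable {α ι β : Type*} [MeasurableSpace α] [MeasurableSpace ι]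
    [Countable ι] [MeasurableSingletonClass ι] [MeasurableSpace β] {r : α → ι}
    (hr : Measurable r) : Measurable fun p : α × (ι → β) => p.2 (r p.1) :=
  (measurable_from_prod_countable_left (f := fun q : (ι → β) × ι => q.1 q.2)
    fun i => measurable_pi_apply i).comp (measurable_snd.prodMk (hr.comp measurable_fst))

theorem measurable_comp_ratCast : Measurable fun f : ℝ → ℝ => f ∘ ((↑) : ℚ → ℝ) :=
  measurable_pi_lambda _ fun q => measurable_pi_apply (q : ℝ)

noncomputable def gridCeil (n : ℕ) (t : ℝ) : ℚ := ⌈t * (n + 1)⌉ / (n + 1)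

theorem measurable_gridCeil (n : ℕ) : Measurable (gridCeil n) :=
  (measurable_of_countable fun z : ℤ => (z / (n + 1) : ℚ)).comp
    (Int.measurable_ceil.comp (measurable_id.mul_const _))

theorem gridCeil_mem_Ico (n : ℕ) (t : ℝ) :
    (gridCeil n t : ℝ) ∈ Ico t (t + 1 / (n + 1)) := by
  have hn : (0 : ℝ) < n + 1 := n.cast_add_one_pos
  simp only [gridCeil, Rat.cast_div, Rat.cast_intCast, Rat.cast_add, Rat.cast_natCast,
    Rat.cast_one, mem_Ico, le_div_iff₀ hn, div_lt_iff₀ hn, add_mul, one_div_mul_cancel hn.ne']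
  exact ⟨Int.le_ceil _, Int.ceil_lt_add_one _⟩

theorem tendsto_gridCeil (t : ℝ) :
    Tendsto (fun n => (gridCeil n t : ℝ)) atTop (𝓝[≥] t) := by
  refine tendsto_nhdsWithin_of_tendsto_nhds_of_eventually_within _ ?_
    (Eventually.of_forall fun n => (gridCeil_mem_Ico n t).1)
  have hupper : Tendsto (fun n : ℕ => t + 1 / ((n : ℝ) + 1)) atTop (𝓝 t) := by
    simpa using tendsto_one_div_add_atTop_nhds_zero_nat.const_add t
  exact tendsto_of_tendsto_of_tendsto_of_le_of_le tendsto_const_nhds hupper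
    (fun n => (gridCeil_mem_Ico n t).1) (fun n => (gridCeil_mem_Ico n t).2.le)

theorem tendsto_gridCeil_sub (t : ℝ) :
    Tendsto (fun n : ℕ => ((gridCeil n t - 1 / (n + 1) : ℚ) : ℝ)) atTop (𝓝[<] t) := by
  have hcast (n : ℕ) :
      ((gridCeil n t - 1 / (n + 1) : ℚ) : ℝ) = gridCeil n t - 1 / (n + 1) := by
    push_cast; ring
  simp only [hcast]
  refine tendsto_nhdsWithin_of_tendsto_nhds_of_eventually_within _ ?_
    (Eventually.of_forall fun n => ?_)
  · simpa using ((tendsto_gridCeil t).mono_right nhdsWithin_le_nhds).sub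
      tendsto_one_div_add_atTop_nhds_zero_nat
  · have := (gridCeil_mem_Ico n t).2
    simp only [mem_Iio]
    linarith

/-- Paths enter through their restriction to `ℚ`: `(t, f) ↦ f t` is not measurable on
`ℝ × (ℝ → ℝ)` for the product σ-algebra, while `(t, x) ↦ x (r t)` is measurable on
`ℝ × (ℚ → ℝ)` for measurable `r : ℝ → ℚ`. -/
def leftJumpSet : Set (ℝ × (ℚ → ℝ)) :=
  {p | 0 < p.1 ∧
    ¬ Tendsto (fun n : ℕ => p.2 (gridCeil n p.1 - 1 / (n + 1)) - p.2 (gridCeil n p.1)) atTop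
      (𝓝 0)}

theorem measurableSet_leftJumpSet : MeasurableSet leftJumpSet := by
  refine (measurable_fst measurableSet_Ioi).inter (MeasurableSet.compl ?_)
  refine measurableSet_tendsto _ fun n => ?_
  exact (measurable_apply_of_countable ((measurable_gridCeil n).sub_const _)).sub
    (measurable_apply_of_countable (measurable_gridCeil n))

theorem Cadlag.mk_mem_leftJumpSet_iff {f : ℝ → ℝ} (hf : Cadlag f) {t : ℝ} (ht : 0 < t) :
    (t, f ∘ ((↑) : ℚ → ℝ)) ∈ leftJumpSet ↔ PathDisc f t := by
  obtain ⟨l, hl⟩ := hf.2 t ht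
  have hdiff := (hl.comp (tendsto_gridCeil_sub t)).sub
    ((hf.1 t ht.le).tendsto.comp (tendsto_gridCeil t))
  simp only [leftJumpSet, mem_ofPred_eq, ht, true_and, PathDisc, Function.comp_def] at hdiff ⊢
  refine not_congr ⟨fun h => ?_, fun h => ?_⟩
  · rwa [sub_eq_zero.1 (tendsto_nhds_unique hdiff h)] at hl
  · simpa [tendsto_nhds_unique hl h] using hdiff

theorem ae_tendsto_nhdsLT_of_indepFun {Ω : Type*} [MeasurableSpace Ω] {P : Measure Ω}
    [IsFiniteMeasure P] {X : Ω → ℝ → ℝ} {T : Ω → ℝ} (hX : Measurable X) (hT : Measurable T)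
    (hTX : IndepFun T X P) (hX_cadlag : ∀ ω, Cadlag (X ω))
    (hfixed : ∀ t, 0 < t → ∀ᵐ ω ∂P, Tendsto (X ω) (𝓝[<] t) (𝓝 (X ω t))) :
    ∀ᵐ ω ∂P, 0 < T ω → Tendsto (X ω) (𝓝[<] (T ω)) (𝓝 (X ω (T ω))) := by
  have hslice (t : ℝ) : P {ω | (t, X ω ∘ ((↑) : ℚ → ℝ)) ∈ leftJumpSet} = 0 := by
    by_cases ht : 0 < t
    · exact measure_mono_null (fun ω hω => ((hX_cadlag ω).mk_mem_leftJumpSet_iff ht).1 hω)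
        (ae_iff.1 (hfixed t ht))
    · simp [leftJumpSet, ht]
  have hnull := (hTX.comp measurable_id measurable_comp_ratCast).measure_mem_eq_zero hT
    (measurable_comp_ratCast.comp hX) measurableSet_leftJumpSet hslice
  filter_upwards [measure_eq_zero_iff_ae_notMem.1 hnull] with ω hω hpos
  exact not_not.1 fun hdisc => hω (((hX_cadlag ω).mk_mem_leftJumpSet_iff hpos).2 hdisc)

noncomputable def ratOsc (x : ℚ → ℝ) (a b : ℚ) : ℝ≥0∞ :=
  ⨆ (q : Ioc a b) (r : Ioc a b), edist (x q) (x r)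

theorem measurable_ratOsc (a b : ℚ) : Measurable fun x => ratOsc x a b :=
  Measurable.iSup fun _ => Measurable.iSup fun _ =>
    (measurable_pi_apply _).edist (measurable_pi_apply _)

theorem edist_le_ratOsc {x : ℚ → ℝ} {a b q r : ℚ} (hq : q ∈ Ioc a b) (hr : r ∈ Ioc a b) :
    edist (x q) (x r) ≤ ratOsc x a b :=
  le_iSup₂ (f := fun (q r : Ioc a b) => edist (x q) (x r)) ⟨q, hq⟩ ⟨r, hr⟩

theorem ratOsc_le {x : ℚ → ℝ} {a b : ℚ} {c η : ℝ} (h : ∀ q ∈ Ioc a b, dist (x q) c ≤ η) :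
    ratOsc x a b ≤ ENNReal.ofReal (2 * η) := by
  refine iSup₂_le fun q r => ?_
  rw [edist_dist]
  exact ENNReal.ofReal_le_ofReal
    ((dist_triangle_right _ _ c).trans (by linarith [h q q.2, h r r.2]))

/-- Junk value: `0` when the oscillation of `x` over `(u, b]` never reaches `δ`. -/
noncomputable def jumpLocator (δ : ℝ) (u : ℚ) (x : ℚ → ℝ) : ℝ :=
  (⨅ b : ℚ, if ENNReal.ofReal δ ≤ ratOsc x u b then ENNReal.ofReal b else ⊤).toReal

theorem measurable_jumpLocator (δ : ℝ) (u : ℚ) : Measurable (jumpLocator δ u) :=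
  ENNReal.measurable_toReal.comp (Measurable.iInf fun b => Measurable.ite
    (measurableSet_le measurable_const (measurable_ratOsc u b)) measurable_const measurable_const)

theorem jumpLocator_nonneg (δ : ℝ) (u : ℚ) (x : ℚ → ℝ) : 0 ≤ jumpLocator δ u x :=
  ENNReal.toReal_nonneg

theorem jumpLocator_eq {x : ℚ → ℝ} {δ t v : ℝ} {u : ℚ} (ht : 0 ≤ t) (htv : t < v)
    (hbefore : ∀ b : ℚ, (b : ℝ) < t → ratOsc x u b < ENNReal.ofReal δ)
    (hafter : ∀ b : ℚ, t ≤ b → (b : ℝ) ≤ v → ENNReal.ofReal δ ≤ ratOsc x u b) :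
    jumpLocator δ u x = t := by
  set I := ⨅ b : ℚ, if ENNReal.ofReal δ ≤ ratOsc x u b then ENNReal.ofReal b else ⊤
  have hI_le {b : ℚ} (htb : t ≤ b) (hbv : (b : ℝ) ≤ v) : I ≤ ENNReal.ofReal b :=
    iInf_le_of_le b (by rw [if_pos (hafter b htb hbv)])
  have hle_I : ENNReal.ofReal t ≤ I := by
    refine le_iInf fun b => ?_
    split_ifs with h
    · exact ENNReal.ofReal_le_ofReal (not_lt.1 fun hbt => (hbefore b hbt).not_ge h)
    · exact le_top
  obtain ⟨b₀, htb₀, hb₀v⟩ := exists_rat_btwn htv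
  have hI_ne_top : I ≠ ⊤ := ne_top_of_le_ne_top ENNReal.ofReal_ne_top (hI_le htb₀.le hb₀v.le)
  refine le_antisymm (le_of_forall_lt_rat_imp_le fun q hq => ?_)
    ((ENNReal.ofReal_le_iff_le_toReal hI_ne_top).1 hle_I)
  obtain ⟨b, htb, hbq⟩ := exists_rat_btwn (lt_min hq htv)
  calc jumpLocator δ u x = I.toReal := rfl
    _ ≤ b := ENNReal.toReal_le_of_le_ofReal (ht.trans htb.le)
        (hI_le htb.le (hbq.le.trans (min_le_right _ _)))
    _ ≤ q := hbq.le.trans (min_le_left _ _)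

theorem exists_jumpLocator_eq {f : ℝ → ℝ} {t l δ η : ℝ} (ht : 0 ≤ t)
    (hleft : ∀ᶠ s in 𝓝[<] t, dist (f s) l ≤ η)
    (hright : ∀ᶠ s in 𝓝[≥] t, dist (f s) (f t) ≤ η)
    (hsmall : 2 * η < δ) (hlarge : δ + 2 * η ≤ dist l (f t)) :
    ∃ u : ℚ, jumpLocator δ u (f ∘ (↑)) = t := by
  obtain ⟨u', hu't, hu'⟩ := mem_nhdsLT_iff_exists_Ioo_subset.1 hleft
  obtain ⟨v, htv, hv⟩ := mem_nhdsGE_iff_exists_Icc_subset.1 hright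
  obtain ⟨u, hu'u, hut⟩ := exists_rat_btwn (mem_Iio.1 hu't)
  obtain ⟨q₀, huq₀, hq₀t⟩ := exists_rat_btwn hut
  have hnear_l {q : ℚ} (huq : u < q) (hqt : (q : ℝ) < t) : dist (f q) l ≤ η :=
    hu' ⟨hu'u.trans (by exact_mod_cast huq), hqt⟩
  have hη : 0 ≤ η := dist_nonneg.trans (hnear_l (by exact_mod_cast huq₀) hq₀t)
  refine ⟨u, jumpLocator_eq ht htv (fun b hbt => ?_) (fun b htb hbv => ?_)⟩
  · refine (ratOsc_le fun q hq => hnear_l hq.1 ((Rat.cast_le.2 hq.2).trans_lt hbt)).trans_lt ?_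
    exact (ENNReal.ofReal_lt_ofReal_iff_of_nonneg (by positivity)).2 hsmall
  · have hq₀ : q₀ ∈ Ioc u b := ⟨by exact_mod_cast huq₀, by exact_mod_cast hq₀t.le.trans htb⟩
    have hb : b ∈ Ioc u b := ⟨by exact_mod_cast hut.trans_le htb, le_rfl⟩
    refine le_trans ?_ (edist_le_ratOsc hq₀ hb)
    have hb_near : dist (f b) (f t) ≤ η := hv ⟨htb, hbv⟩
    rw [Function.comp_apply, Function.comp_apply, edist_dist]
    exact ENNReal.ofReal_le_ofReal (by
      linarith [dist_triangle4 l (f q₀) (f b) (f t), hnear_l (by exact_mod_cast huq₀) hq₀t,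
        dist_comm l (f q₀)])

theorem Cadlag.exists_jumpLocator_eq_of_pathDisc {f : ℝ → ℝ} (hf : Cadlag f) {t : ℝ} (ht : 0 < t)
    (hdisc : PathDisc f t) : ∃ δ u : ℚ, jumpLocator δ u (f ∘ (↑)) = t := by
  obtain ⟨l, hl⟩ := hf.2 t ht
  have hjump : 0 < dist l (f t) := dist_pos.2 fun h => hdisc (h ▸ hl)
  obtain ⟨δ, hδ_gt, hδ_lt⟩ :=
    exists_rat_btwn (by linarith : dist l (f t) / 4 < dist l (f t) / 2)
  have hη : 0 < dist l (f t) / 8 := by positivity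
  obtain ⟨u, hu⟩ := exists_jumpLocator_eq (δ := δ) ht.le
    (hl.eventually (Metric.closedBall_mem_nhds l hη))
    ((hf.1 t ht.le).eventually (Metric.closedBall_mem_nhds (f t) hη)) (by linarith)
    (by linarith)
  exact ⟨δ, u, hu⟩

/-- Let `X` and `Y` be independent càdlàg processes with `X` stochastically continuous. Then
for every measurable nonnegative functional `F` on path space, almost surely `X` is (left)
continuous at the random time `F (Y)` (with the convention `X(0−) = X(0)`); in particular,
`X` and `Y` almost surely share no common discontinuity point. -/
theorem indep_stochastically_continuous_no_shared_disc
    {Ω : Type*} [MeasurableSpace Ω] (P : Measure Ω) [IsProbabilityMeasure P]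
    (X Y : Ω → ℝ → ℝ) (hX_meas : Measurable X) (hY_meas : Measurable Y)
    (hX_cadlag : ∀ ω, Cadlag (X ω)) (hY_cadlag : ∀ ω, Cadlag (Y ω))
    (hindep : IndepFun X Y P)
    (hX_stocont : ∀ t : ℝ, 0 ≤ t → ∀ ε : ℝ, 0 < ε →
      Tendsto (fun s => P {ω | ε ≤ |X ω s - X ω t|}) (nhdsWithin t (Set.Ici 0)) (nhds 0)) :
    (∀ F : (ℝ → ℝ) → ℝ, Measurable F → (∀ p, 0 ≤ F p) →
      ∀ᵐ ω ∂P, F (Y ω) = 0 ∨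
        Tendsto (X ω) (nhdsWithin (F (Y ω)) (Set.Iio (F (Y ω)))) (nhds (X ω (F (Y ω))))) ∧
    (∀ᵐ ω ∂P, ¬ ∃ t : ℝ, 0 < t ∧ PathDisc (X ω) t ∧ PathDisc (Y ω) t) := by
  have hfixed (t : ℝ) (ht : 0 < t) : ∀ᵐ ω ∂P, Tendsto (X ω) (𝓝[<] t) (𝓝 (X ω t)) := by
    have hleft : TendstoInMeasure P (fun s ω => X ω s) (𝓝[<] t) (fun ω => X ω t) :=
      tendstoInMeasure_iff_dist.2 fun ε hε => (hX_stocont t ht.le ε hε).mono_left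
        (nhdsWithin_le_of_mem (mem_nhdsWithin_of_mem_nhds (Ici_mem_nhds ht)))
    exact hleft.ae_tendsto_of_ae_exists_tendsto (ae_of_all _ fun ω => (hX_cadlag ω).2 t ht)
  have hrandom (F : (ℝ → ℝ) → ℝ) (hF : Measurable F) (hF0 : ∀ p, 0 ≤ F p) :
      ∀ᵐ ω ∂P, F (Y ω) = 0 ∨ Tendsto (X ω) (𝓝[<] (F (Y ω))) (𝓝 (X ω (F (Y ω)))) := by
    filter_upwards [ae_tendsto_nhdsLT_of_indepFun hX_meas (hF.comp hY_meas)
      (hindep.symm.comp hF measurable_id) hX_cadlag hfixed] with ω hω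
    exact (hF0 (Y ω)).eq_or_lt.imp Eq.symm hω
  refine ⟨hrandom, ?_⟩
  have hjumps : ∀ᵐ ω ∂P, ∀ δ u : ℚ, jumpLocator δ u (Y ω ∘ (↑)) = 0 ∨
      Tendsto (X ω) (𝓝[<] (jumpLocator δ u (Y ω ∘ (↑))))
        (𝓝 (X ω (jumpLocator δ u (Y ω ∘ (↑))))) :=
    ae_all_iff.2 fun δ => ae_all_iff.2 fun u => hrandom _
      ((measurable_jumpLocator δ u).comp measurable_comp_ratCast) fun _ => jumpLocator_nonneg ..
  filter_upwards [hjumps] with ω hω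
  rintro ⟨t, ht, hdiscX, hdiscY⟩
  obtain ⟨δ, u, hδu⟩ := (hY_cadlag ω).exists_jumpLocator_eq_of_pathDisc ht hdiscY
  rcases hω δ u with h | h <;> rw [hδu] at h
  exacts [ht.ne' h, hdiscX h]
end

section
/- Let F be a continuous CDF on [0,∞) with F(0) = 0, let F^{*(k)} denote its k-fold convolution, and let p ∈ (0,1). If p = 1/2, then Σ_{j=0}^{∞} (1 − F^{*(j+1)}(t)) (1−p)^j p = Σ_{j=0}^{∞} (1 − F^{*(j+1)}(t)) p^j (1−p) for all t ≥ 0. If p > 1/2, then for every t > 0 with F(t) ∈ (0,1), Σ_{j=0}^{∞} (1 − F^{*(j+1)}(t)) (1−p)^j p − (1−F(t)) p < Σ_{j=0}^{∞} (1 − F^{*(j+1)}(t)) p^j (1−p) − (1−F(t)) (1−p), and the reverse strict inequality holds if p < 1/2. -/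
open MeasureTheory Filter

/-- The iterated convolution of a CDF `F` with itself:
`Fconv F n = F^{*(n+1)}`, with `F^{*(1)} = F` and
`F^{*(k+1)}(t) = ∫₀ᵗ F^{*(k)}(t−s) dF(s)`. -/
noncomputable def Fconv (F : StieltjesFunction ℝ) : ℕ → ℝ → ℝ
  | 0 => fun t => F t
  | (n + 1) => fun t => ∫ s in Set.Icc 0 t, Fconv F n (t - s) ∂F.measure

/-!
Each survival probability `1 - F^{*(j+1)}(t)` lies in `[0, 1]` and is positive once `F(t) < 1`,
because `0 ≤ F^{*(j+1)} ≤ F^{j+1}`: the convolution integral runs over `[0, t]`, a set of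
`dF`-mass at most `F(t)`. Apart from index `0`, the two series are compared term by term: for
`p > 1/2` and `j ≥ 1`, `(1-p)^j p ≤ p^j (1-p)`, with strict inequality from `j = 2` on. The case
`p < 1/2` is the case `p > 1/2` with `p` and `1 - p` exchanged.
-/

open Set

namespace StieltjesFunction

theorem measureReal_Icc_zero_le {F : StieltjesFunction ℝ} (hF : ∀ x, 0 ≤ F x) (x : ℝ) :
    F.measure.real (Icc 0 x) ≤ F x := by
  have h : 0 ≤ Function.leftLim F 0 := (hF (-1)).trans (F.mono.le_leftLim (by norm_num))
  rw [measureReal_def, F.measure_Icc, ENNReal.toReal_ofReal']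
  exact max_le (by linarith) (hF x)

end StieltjesFunction

section Fconv

variable {F : StieltjesFunction ℝ}

theorem Fconv_nonneg (hF : ∀ x, 0 ≤ F x) : ∀ n x, 0 ≤ Fconv F n x
  | 0, x => hF x
  | n + 1, x => setIntegral_nonneg measurableSet_Icc fun s _ => Fconv_nonneg hF n (x - s)

theorem Fconv_le_pow (hF : ∀ x, 0 ≤ F x) : ∀ n x, Fconv F n x ≤ F x ^ (n + 1)
  | 0, x => by simp [Fconv]
  | n + 1, x => by
    have hbound : ∀ s ∈ Icc 0 x, ‖Fconv F n (x - s)‖ ≤ F x ^ (n + 1) := fun s hs => by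
      rw [Real.norm_of_nonneg (Fconv_nonneg hF n _)]
      exact (Fconv_le_pow hF n _).trans
        (pow_le_pow_left₀ (hF _) (F.mono (by linarith [hs.1])) _)
    calc Fconv F (n + 1) x ≤ ‖∫ s in Icc 0 x, Fconv F n (x - s) ∂F.measure‖ := Real.le_norm_self _
      _ ≤ F x ^ (n + 1) * F.measure.real (Icc 0 x) :=
        norm_setIntegral_le_of_norm_le_const measure_Icc_lt_top hbound
      _ ≤ F x ^ (n + 1) * F x :=
        mul_le_mul_of_nonneg_left (F.measureReal_Icc_zero_le hF x) (pow_nonneg (hF x) _)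
      _ = F x ^ (n + 1 + 1) := (pow_succ _ _).symm

theorem Fconv_lt_one (hF : ∀ x, 0 ≤ F x) {t : ℝ} (ht : F t < 1)
    (n : ℕ) : Fconv F n t < 1 :=
  (Fconv_le_pow hF n t).trans_lt (pow_lt_one₀ (hF t) ht n.succ_ne_zero)

end Fconv

theorem summable_mul_pow_mul {c : ℕ → ℝ} {C r : ℝ} (hc : ∀ j, ‖c j‖ ≤ C) (hr : ‖r‖ < 1)
    (s : ℝ) : Summable fun j => c j * r ^ j * s := by
  refine .of_norm_bounded
    (((summable_geometric_of_lt_one (norm_nonneg r) hr).mul_left C).mul_right ‖s‖) fun j => ?_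
  rw [norm_mul, norm_mul, norm_pow]
  have hC : 0 ≤ C := (norm_nonneg _).trans (hc 0)
  gcongr
  exact hc j

theorem tsum_mul_geometric_sub_lt {c : ℕ → ℝ} (hc : ∀ j, c j ∈ Icc 0 1) (hc2 : 0 < c 2)
    {p : ℝ} (hp : 1 / 2 < p) (hp1 : p < 1) :
    (∑' j, c j * (1 - p) ^ j * p) - c 0 * p < (∑' j, c j * p ^ j * (1 - p)) - c 0 * (1 - p) := by
  have hp0 : 0 < p := by linarith
  have hq0 : 0 < 1 - p := sub_pos.2 hp1
  have hc_norm : ∀ j, ‖c j‖ ≤ 1 := fun j => by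
    rw [Real.norm_of_nonneg (hc j).1]; exact (hc j).2
  have hsum_q := summable_mul_pow_mul hc_norm (r := 1 - p)
    (by rw [Real.norm_of_nonneg hq0.le]; linarith) p
  have hsum_p := summable_mul_pow_mul hc_norm (r := p)
    (by rwa [Real.norm_of_nonneg hp0.le]) (1 - p)
  have hweight : ∀ j, (1 - p) ^ (j + 1) * p ≤ p ^ (j + 1) * (1 - p) := fun j =>
    calc (1 - p) ^ (j + 1) * p = (1 - p) ^ j * ((1 - p) * p) := by ring
      _ ≤ p ^ j * ((1 - p) * p) := by gcongr; linarith
      _ = p ^ (j + 1) * (1 - p) := by ring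
  -- the weights of index `1` coincide, so strictness has to come from index `2`
  have hstrict : (1 - p) ^ 2 * p < p ^ 2 * (1 - p) := by
    nlinarith [mul_pos (mul_pos hp0 hq0) (by linarith : 0 < 2 * p - 1)]
  rw [hsum_q.tsum_eq_zero_add, hsum_p.tsum_eq_zero_add]
  suffices ∑' j, c (j + 1) * (1 - p) ^ (j + 1) * p < ∑' j, c (j + 1) * p ^ (j + 1) * (1 - p) by
    simp only [pow_zero, mul_one]; linarith
  simp only [mul_assoc]
  exact Summable.tsum_lt_tsum_of_nonneg (i := 1)
    (fun j => mul_nonneg (hc _).1 (by positivity))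
    (fun j => mul_le_mul_of_nonneg_left (hweight j) (hc _).1)
    (mul_lt_mul_of_pos_left hstrict hc2)
    (by simpa only [mul_assoc] using (summable_nat_add_iff 1).2 hsum_p)

theorem compound_geometric_survival_comparison_general
    (F : StieltjesFunction ℝ)
    (hF_zero : ∀ t : ℝ, t ≤ 0 → F t = 0)
    (p : ℝ) (hp : p ∈ Set.Ioo (0 : ℝ) 1) :
    (p = 1 / 2 → ∀ t : ℝ, 0 ≤ t →
      (∑' j : ℕ, (1 - Fconv F j t) * (1 - p) ^ j * p) =
        ∑' j : ℕ, (1 - Fconv F j t) * p ^ j * (1 - p)) ∧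
    (1 / 2 < p → ∀ t : ℝ, 0 < t → F t ∈ Set.Ioo (0 : ℝ) 1 →
      (∑' j : ℕ, (1 - Fconv F j t) * (1 - p) ^ j * p) - (1 - F t) * p <
        (∑' j : ℕ, (1 - Fconv F j t) * p ^ j * (1 - p)) - (1 - F t) * (1 - p)) ∧
    (p < 1 / 2 → ∀ t : ℝ, 0 < t → F t ∈ Set.Ioo (0 : ℝ) 1 →
      (∑' j : ℕ, (1 - Fconv F j t) * p ^ j * (1 - p)) - (1 - F t) * (1 - p) <
        (∑' j : ℕ, (1 - Fconv F j t) * (1 - p) ^ j * p) - (1 - F t) * p) := by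
  have hF_nonneg : ∀ x, 0 ≤ F x := fun x =>
    (hF_zero (min x 0) (min_le_right x 0)).ge.trans (F.mono (min_le_left x 0))
  have hcompare : ∀ q, 1 / 2 < q → q < 1 → ∀ t, F t < 1 →
      (∑' j, (1 - Fconv F j t) * (1 - q) ^ j * q) - (1 - F t) * q <
        (∑' j, (1 - Fconv F j t) * q ^ j * (1 - q)) - (1 - F t) * (1 - q) :=
    fun q hq hq1 t ht => tsum_mul_geometric_sub_lt
      (fun j => ⟨sub_nonneg.2 (Fconv_lt_one hF_nonneg ht j).le,
        sub_le_self _ (Fconv_nonneg hF_nonneg j t)⟩)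
      (sub_pos.2 (Fconv_lt_one hF_nonneg ht 2)) hq hq1
  refine ⟨?_, fun hp2 t _ hFt => hcompare p hp2 hp.2 t hFt.2, fun hp2 t _ hFt => ?_⟩
  · rintro rfl t _
    norm_num
  · simpa only [sub_sub_cancel] using hcompare (1 - p) (by linarith) (by linarith [hp.1]) t hFt.2

/-- Comparison of geometric-compound survival functions. Let `F` be a continuous CDF on
`[0,∞)` with `F(0) = 0` and let `p ∈ (0,1)`. If `p = 1/2`, the two compound-geometric
survival series coincide; if `p > 1/2`, the stated strict inequality holds at every `t > 0`
with `F(t) ∈ (0,1)`, and the reverse strict inequality holds if `p < 1/2`. -/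
theorem compound_geometric_survival_comparison
    (F : StieltjesFunction ℝ) (hF_cont : Continuous F)
    (hF_zero : ∀ t : ℝ, t ≤ 0 → F t = 0)
    (hF_top : Tendsto (F : ℝ → ℝ) atTop (nhds 1))
    (p : ℝ) (hp : p ∈ Set.Ioo (0 : ℝ) 1) :
    (p = 1 / 2 → ∀ t : ℝ, 0 ≤ t →
      (∑' j : ℕ, (1 - Fconv F j t) * (1 - p) ^ j * p) =
        ∑' j : ℕ, (1 - Fconv F j t) * p ^ j * (1 - p)) ∧
    (1 / 2 < p → ∀ t : ℝ, 0 < t → F t ∈ Set.Ioo (0 : ℝ) 1 →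
      (∑' j : ℕ, (1 - Fconv F j t) * (1 - p) ^ j * p) - (1 - F t) * p <
        (∑' j : ℕ, (1 - Fconv F j t) * p ^ j * (1 - p)) - (1 - F t) * (1 - p)) ∧
    (p < 1 / 2 → ∀ t : ℝ, 0 < t → F t ∈ Set.Ioo (0 : ℝ) 1 →
      (∑' j : ℕ, (1 - Fconv F j t) * p ^ j * (1 - p)) - (1 - F t) * (1 - p) <
        (∑' j : ℕ, (1 - Fconv F j t) * (1 - p) ^ j * p) - (1 - F t) * p) :=
  compound_geometric_survival_comparison_general F hF_zero p hp
end
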